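/- arXiv:1706.07940 — 3 statements merged into one kernel-verified Lean document; each statement's English description precedes it below -/
import Mathlib

section
/- Let p be an odd prime, n ≥ 1, and k an integer coprime to p. Define λ : ℤ/p^n × ℤ/p^n → ℚ/ℤ by λ(a,b) = (k/p^n)·a·b. If there exists an isomorphism Φ : ℤ/p^n → ℤ/p^n with λ(Φ(a), Φ(b)) = -λ(a,b) for all a, b, then p ≡ 1 mod 4. -/
/-- `ℚ/ℤ` as an additive group. -/
abbrev QZ : Type := AddCircle (1 : ℚ)

/-- A linking form on a finitely generated abelian group `H`: a bilinear, symmetric,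
nonsingular pairing into `ℚ/ℤ`.  Nonsingularity is expressed by saying that the adjoint
map `a ↦ (b ↦ λ a b)` is injective and surjective onto `Hom(H, ℚ/ℤ)`. -/
structure LinkingForm (H : Type*) [AddCommGroup H] where
  form : H → H → QZ
  add_left : ∀ a b c : H, form (a + b) c = form a c + form b c
  add_right : ∀ a b c : H, form a (b + c) = form a b + form a c
  symm : ∀ a b : H, form a b = form b a
  adjoint_injective : ∀ a : H, (∀ b : H, form a b = 0) → a = 0
  adjoint_surjective : ∀ f : H →+ QZ, ∃ a : H, ∀ b : H, form a b = f b

/-- The `p`-primary part of an abelian group: elements killed by a power of `p`. -/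
def primaryPart (H : Type*) [AddCommGroup H] (p : ℕ) : AddSubgroup H where
  carrier := {g | ∃ k : ℕ, p ^ k • g = 0}
  zero_mem' := ⟨0, smul_zero _⟩
  add_mem' := by
    rintro a b ⟨k, hk⟩ ⟨l, hl⟩
    refine ⟨k + l, ?_⟩
    have ha : p ^ (k + l) • a = 0 := by rw [pow_add, mul_comm, mul_smul, hk, smul_zero]
    have hb : p ^ (k + l) • b = 0 := by rw [pow_add, mul_smul, hl, smul_zero]
    rw [smul_add, ha, hb, add_zero]
  neg_mem' := by rintro a ⟨k, hk⟩; exact ⟨k, by rw [smul_neg, hk, neg_zero]⟩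

/-- The standard pairing `(a, b) ↦ (k/pⁿ)·a·b` on `ℤ/pⁿ`, with values in `ℚ/ℤ`. -/
noncomputable def stdPairing (p n : ℕ) (k : ℤ) (a b : ZMod (p ^ n)) : QZ :=
  ((((k : ℚ) * (a.val : ℚ) * (b.val : ℚ)) / (p : ℚ) ^ n : ℚ) : QZ)

/-! With `u = Φ 1`, the condition at `(1, 1)` says `k (u² + 1) ≡ 0 mod pⁿ`. Since `k` is a unit
modulo `pⁿ`, `-1` is a square modulo `pⁿ`, hence modulo `p`, which rules out `p ≡ 3 mod 4`. -/

theorem QZ.coe_intCast_div_eq_zero_iff {N : ℕ} (hN : N ≠ 0) (z : ℤ) :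
    (((z : ℚ) / N : ℚ) : QZ) = 0 ↔ (z : ZMod N) = 0 := by
  rw [AddCircle.coe_eq_zero_iff, ZMod.intCast_zmod_eq_zero_iff_dvd]
  have hN' : (N : ℚ) ≠ 0 := Nat.cast_ne_zero.mpr hN
  refine exists_congr fun m ↦ ?_
  rw [zsmul_eq_mul, mul_one, eq_div_iff hN', eq_comm, mul_comm]
  exact_mod_cast Iff.rfl

theorem stdPairing_eq_neg_iff {p n : ℕ} (hp : p ≠ 0) (k : ℤ) (a b c d : ZMod (p ^ n)) :
    stdPairing p n k a b = -stdPairing p n k c d ↔ (k : ZMod (p ^ n)) * (a * b + c * d) = 0 := by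
  have : NeZero (p ^ n) := ⟨pow_ne_zero n hp⟩
  have hsum : stdPairing p n k a b + stdPairing p n k c d =
      (((k * (a.val * b.val + c.val * d.val) : ℤ) : ℚ) / ((p ^ n : ℕ) : ℚ) : ℚ) := by
    rw [stdPairing, stdPairing, ← AddCircle.coe_add]
    push_cast
    ring_nf
  rw [eq_neg_iff_add_eq_zero, hsum, QZ.coe_intCast_div_eq_zero_iff (pow_ne_zero n hp)]
  push_cast
  simp only [ZMod.natCast_zmod_val]

theorem isSquare_neg_one_of_stdPairing_eq_neg {p n : ℕ} (hp : p ≠ 0) {k : ℤ}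
    (hk : IsCoprime k (p : ℤ)) {u : ZMod (p ^ n)}
    (hu : stdPairing p n k u u = -stdPairing p n k 1 1) :
    IsSquare (-1 : ZMod (p ^ n)) := by
  have hk_unit : IsUnit (k : ZMod (p ^ n)) := by
    rw [ZMod.coe_int_isUnit_iff_isCoprime]
    exact_mod_cast (hk.pow_right (n := n)).symm
  rw [stdPairing_eq_neg_iff hp, hk_unit.mul_right_eq_zero, mul_one] at hu
  exact ⟨u, neg_eq_of_add_eq_zero_left hu⟩

/-- for `p` an odd prime, if `ℤ/pⁿ` with the pairing `(k/pⁿ)·a·b` admits an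
automorphism `Φ` with `λ(Φa, Φb) = -λ(a,b)`, then `p ≡ 1 mod 4`. -/
theorem one_mod_four_of_anti_isometry (p n : ℕ) (hp : p.Prime) (hodd : Odd p) (hn : 1 ≤ n)
    (k : ℤ) (hk : IsCoprime k (p : ℤ)) (Φ : ZMod (p ^ n) ≃+ ZMod (p ^ n))
    (hΦ : ∀ a b : ZMod (p ^ n),
      stdPairing p n k (Φ a) (Φ b) = - stdPairing p n k a b) :
    p % 4 = 1 := by
  have hsq : IsSquare (-1 : ZMod (p ^ n)) :=
    isSquare_neg_one_of_stdPairing_eq_neg hp.ne_zero hk (hΦ 1 1)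
  have hp_mem : p ∈ (p ^ n).primeFactors := by
    rw [Nat.primeFactors_prime_pow (by omega) hp]
    exact Finset.mem_singleton_self p
  have hp_ne_three := Nat.mod_four_ne_three_of_mem_primeFactors_of_isSquare_neg_one hp_mem hsq
  have hp_odd := Nat.odd_iff.mp hodd
  omega
end

section
/- Let H be a finite abelian group admitting a linking form λ : H × H → ℚ/ℤ, and let p be a prime with p ≡ 3 mod 4. If there exists a group automorphism Φ of H with λ(Φ(a),Φ(b)) = -λ(a,b) for all a,b ∈ H, then the p-primary part of H is either zero or not cyclic. -/
/-!
A linking form restricts to a nonsingular form on the `p`-primary part `H_p`: pairing an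
element of `H_p` against `b` is the same as pairing it against the `p`-primary component of `b`,
since the two components pair to zero. So if `H_p` is cyclic with generator `g`, the
self-pairing `λ(g, g)` has the same order `pⁿ` as `g`. The automorphism `Φ` preserves `H_p`,
hence `Φ g = t • g`, and `λ(Φg, Φg) = -λ(g, g)` gives `(t² + 1) • λ(g, g) = 0`. Thus
`p ∣ t² + 1` with `n ≥ 1`, i.e. `-1` is a square mod `p`, impossible when `p ≡ 3 mod 4`.
-/

theorem map_mem_primaryPart {H K F : Type*} [AddCommGroup H] [AddCommGroup K] [FunLike F H K]
    [AddMonoidHomClass F H K] (f : F) {p : ℕ} {x : H} (hx : x ∈ primaryPart H p) :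
    f x ∈ primaryPart K p :=
  let ⟨k, hk⟩ := hx
  ⟨k, by rw [← map_nsmul, hk, map_zero]⟩

theorem ordCompl_card_nsmul_mem_primaryPart {H : Type*} [AddCommGroup H] [Finite H] (p : ℕ)
    (b : H) : ordCompl[p] (Nat.card H) • b ∈ primaryPart H p :=
  ⟨(Nat.card H).factorization p, by
    rw [smul_smul, Nat.ordProj_mul_ordCompl_eq_self, card_nsmul_eq_zero']⟩

theorem prime_dvd_addOrderOf_of_mem_primaryPart {H : Type*} [AddCommGroup H] {p : ℕ}
    (hp : p.Prime) {x : H} (hx : x ∈ primaryPart H p) (hx0 : x ≠ 0) : p ∣ addOrderOf x := by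
  obtain ⟨k, hk⟩ := hx
  obtain ⟨i, -, hi⟩ := (Nat.dvd_prime_pow hp).1 (addOrderOf_dvd_of_nsmul_eq_zero hk)
  rcases i with _ | i
  · exact absurd (AddMonoid.addOrderOf_eq_one_iff.1 hi) hx0
  · exact hi ▸ dvd_pow_self p i.succ_ne_zero

theorem Nat.Prime.not_dvd_mul_self_add_one {p : ℕ} (hp : p.Prime) (hp4 : p % 4 = 3) (t : ℤ) :
    ¬ (p : ℤ) ∣ t * t + 1 := by
  have : Fact p.Prime := ⟨hp⟩
  intro h
  refine ZMod.mod_four_ne_three_of_sq_eq_neg_one (y := (t : ZMod p)) ?_ hp4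
  have h' := (ZMod.intCast_zmod_eq_zero_iff_dvd _ _).2 h
  push_cast at h'
  linear_combination h'

namespace LinkingForm

variable {H : Type*} [AddCommGroup H] (lf : LinkingForm H)

def toHom : H →+ H →+ QZ :=
  AddMonoidHom.mk' (fun a => AddMonoidHom.mk' (lf.form a) (lf.add_right a))
    fun a b => AddMonoidHom.ext (lf.add_left a b)

theorem form_zsmul_left (t : ℤ) (a b : H) : lf.form (t • a) b = t • lf.form a b :=
  DFunLike.congr_fun (map_zsmul lf.toHom t a) b

theorem form_zsmul_right (t : ℤ) (a b : H) : lf.form a (t • b) = t • lf.form a b :=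
  map_zsmul (lf.toHom a) t b

theorem form_nsmul_left (t : ℕ) (a b : H) : lf.form (t • a) b = t • lf.form a b :=
  DFunLike.congr_fun (map_nsmul lf.toHom t a) b

theorem form_nsmul_right (t : ℕ) (a b : H) : lf.form a (t • b) = t • lf.form a b :=
  map_nsmul (lf.toHom a) t b

theorem form_zero_left (b : H) : lf.form 0 b = 0 :=
  DFunLike.congr_fun (map_zero lf.toHom) b

theorem exists_mem_primaryPart_form_eq [Finite H] {p : ℕ} (hp : p.Prime) {x : H}
    (hx : x ∈ primaryPart H p) (b : H) : ∃ y ∈ primaryPart H p, lf.form x b = lf.form x y := by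
  obtain ⟨k, hk⟩ := hx
  set q := ordCompl[p] (Nat.card H)
  obtain ⟨u, v, huv⟩ : IsCoprime ((p ^ k : ℕ) : ℤ) (q : ℤ) :=
    Nat.isCoprime_iff_coprime.2 ((Nat.coprime_ordCompl hp Nat.card_pos.ne').pow_left k)
  refine ⟨v • q • b, AddSubgroup.zsmul_mem _ (ordCompl_card_nsmul_mem_primaryPart p b) v, ?_⟩
  calc lf.form x b = (u * (p ^ k : ℕ) + v * q : ℤ) • lf.form x b := by rw [huv, one_smul]
    _ = u • lf.form ((p ^ k) • x) b + lf.form x (v • q • b) := by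
      simp only [add_smul, mul_smul, natCast_zsmul, form_nsmul_left, form_nsmul_right,
        form_zsmul_right]
    _ = lf.form x (v • q • b) := by rw [hk, form_zero_left, smul_zero, zero_add]

theorem eq_zero_of_forall_mem_primaryPart_form_eq_zero [Finite H] {p : ℕ} (hp : p.Prime)
    {x : H} (hx : x ∈ primaryPart H p) (h : ∀ y ∈ primaryPart H p, lf.form x y = 0) : x = 0 :=
  lf.adjoint_injective x fun b =>
    let ⟨y, hy, hxy⟩ := lf.exists_mem_primaryPart_form_eq hp hx b
    hxy.trans (h y hy)

theorem addOrderOf_form_self_of_zmultiples_eq_primaryPart [Finite H] {p : ℕ} (hp : p.Prime)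
    {g : H} (hg : AddSubgroup.zmultiples g = primaryPart H p) :
    addOrderOf (lf.form g g) = addOrderOf g := by
  refine Nat.dvd_antisymm (addOrderOf_dvd_of_nsmul_eq_zero ?_) (addOrderOf_dvd_of_nsmul_eq_zero ?_)
  · rw [← form_nsmul_left, addOrderOf_nsmul_eq_zero, form_zero_left]
  · have hgmem : g ∈ primaryPart H p := hg ▸ AddSubgroup.mem_zmultiples g
    refine lf.eq_zero_of_forall_mem_primaryPart_form_eq_zero hp
      (AddSubgroup.nsmul_mem _ hgmem _) fun y hy => ?_
    obtain ⟨t, rfl⟩ := AddSubgroup.mem_zmultiples_iff.1 (hg ▸ hy)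
    rw [form_zsmul_right, form_nsmul_left, addOrderOf_nsmul_eq_zero, smul_zero]

end LinkingForm

/-- if a finite abelian group with a linking form admits an automorphism `Φ`
with `λ(Φa,Φb) = -λ(a,b)`, then for every prime `p ≡ 3 mod 4` the `p`-primary part is
zero or not cyclic. -/
theorem primaryPart_trivial_or_not_cyclic {H : Type*} [AddCommGroup H] [Finite H]
    (lf : LinkingForm H) (p : ℕ) (hp : p.Prime) (hp4 : p % 4 = 3)
    (Φ : H ≃+ H) (hΦ : ∀ a b : H, lf.form (Φ a) (Φ b) = - lf.form a b) :
    primaryPart H p = ⊥ ∨ ¬ IsAddCyclic (primaryPart H p) := by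
  refine or_iff_not_imp_left.2 fun hne hcyc => ?_
  obtain ⟨g, hg⟩ := (primaryPart H p).isAddCyclic_iff_exists_zmultiples_eq_top.1 hcyc
  have hg0 : g ≠ 0 := by
    rintro rfl
    exact hne (hg ▸ AddSubgroup.zmultiples_zero_eq_bot)
  have hgmem : g ∈ primaryPart H p := hg ▸ AddSubgroup.mem_zmultiples g
  obtain ⟨t, ht⟩ :=
    AddSubgroup.mem_zmultiples_iff.1 (hg ▸ map_mem_primaryPart Φ hgmem)
  have hkill : (t * t + 1) • lf.form g g = 0 := by
    rw [add_smul, one_smul, mul_smul, ← lf.form_zsmul_left, ← lf.form_zsmul_right, ht, hΦ,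
      neg_add_cancel]
  have hdvd : (p : ℤ) ∣ t * t + 1 :=
    (Int.natCast_dvd_natCast.2 (prime_dvd_addOrderOf_of_mem_primaryPart hp hgmem hg0)).trans
      (lf.addOrderOf_form_self_of_zmultiples_eq_primaryPart hp hg ▸
        addOrderOf_dvd_iff_zsmul_eq_zero.2 hkill)
  exact hp.not_dvd_mul_self_add_one hp4 t hdvd
end

section
/- Let H be a finite abelian group admitting a linking form λ : H × H → ℚ/ℤ together with an automorphism Φ of H satisfying λ(Φ(a),Φ(b)) = -λ(a,b) for all a,b. Then for every prime p with p ≡ 3 mod 4, either p does not divide |H| or p² divides |H|. -/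
/-!
If `p` divides `|H|` exactly once, the elements of `H` killed by `p` form a cyclic group `⟨x⟩` of
order `p`. Nonsingularity of `λ` forces `λ(x, x) ≠ 0`, so `λ(x, x)` has order `p`. The
automorphism `Φ` preserves `⟨x⟩`, say `Φ x = u • x`, and then `λ(x, x) = -u² λ(x, x)`, i.e.
`p ∣ u² + 1`. So `-1` is a square modulo `p`, which is impossible for `p ≡ 3 mod 4`.
-/

theorem ZMod.mod_four_ne_three_of_dvd_sq_add_one {p : ℕ} [Fact p.Prime] {u : ℤ}
    (h : (p : ℤ) ∣ u ^ 2 + 1) : p % 4 ≠ 3 := by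
  have hu : ((u ^ 2 + 1 : ℤ) : ZMod p) = 0 := (ZMod.intCast_zmod_eq_zero_iff_dvd _ p).mpr h
  push_cast at hu
  exact ZMod.mod_four_ne_three_of_sq_eq_neg_one (y := (u : ZMod p)) (by linear_combination hu)

theorem AddSubgroup.mem_zmultiples_of_nsmul_eq_zero {H : Type*} [AddCommGroup H] {p : ℕ}
    [Fact p.Prime] (hsq : ¬ p ^ 2 ∣ Nat.card H) {x y : H} (hx : addOrderOf x = p)
    (hy : p • y = 0) : y ∈ zmultiples x := by
  by_contra hyx
  have hq : addOrderOf (y : H ⧸ zmultiples x) = p :=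
    addOrderOf_eq_prime (by rw [← QuotientAddGroup.mk_nsmul, hy, QuotientAddGroup.mk_zero])
      (mt (QuotientAddGroup.eq_zero_iff y).mp hyx)
  apply hsq
  rw [card_eq_card_quotient_mul_card_addSubgroup, Nat.card_zmultiples, hx, sq]
  exact mul_dvd_mul_right (hq ▸ _root_.addOrderOf_dvd_natCard _) p

namespace LinkingForm

variable {H : Type*} [AddCommGroup H] (lf : LinkingForm H)

def toAddMonoidHom : H →+ H →+ QZ :=
  AddMonoidHom.mk' (fun a ↦ AddMonoidHom.mk' (lf.form a) (lf.add_right a))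
    fun a b ↦ AddMonoidHom.ext (lf.add_left a b)

theorem nsmul_right (n : ℕ) (a b : H) : lf.form a (n • b) = n • lf.form a b :=
  map_nsmul (lf.toAddMonoidHom a) n b

theorem zsmul_right (n : ℤ) (a b : H) : lf.form a (n • b) = n • lf.form a b :=
  map_zsmul (lf.toAddMonoidHom a) n b

theorem nsmul_left (n : ℕ) (a b : H) : lf.form (n • a) b = n • lf.form a b := by
  rw [lf.symm, nsmul_right, lf.symm]

theorem zsmul_left (n : ℤ) (a b : H) : lf.form (n • a) b = n • lf.form a b := by
  rw [lf.symm, zsmul_right, lf.symm]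

theorem addOrderOf_form_eq_of_addOrderOf_eq_prime {p : ℕ} [Fact p.Prime] {x : H}
    (hx : addOrderOf x = p) {b : H} (hb : lf.form x b ≠ 0) : addOrderOf (lf.form x b) = p :=
  addOrderOf_eq_prime (by
    rw [← nsmul_left, ← hx, addOrderOf_nsmul_eq_zero, lf.symm]
    exact map_zero (lf.toAddMonoidHom b)) hb

/- With `|H| = p m`, `m • b` lies in `⟨x⟩`, while `m • λ(x, b) ≠ 0` because `λ(x, b)` has
order `p ∤ m`. -/
theorem form_self_ne_zero_of_addOrderOf_eq_prime {p : ℕ} [Fact p.Prime]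
    (hsq : ¬ p ^ 2 ∣ Nat.card H) {x : H} (hx : addOrderOf x = p) : lf.form x x ≠ 0 := by
  obtain ⟨m, hm⟩ : p ∣ Nat.card H := hx ▸ addOrderOf_dvd_natCard x
  have hpm : ¬ p ∣ m := fun ⟨k, hk⟩ ↦ hsq ⟨k, by rw [hm, hk]; ring⟩
  have hx0 : x ≠ 0 := fun h ↦ (Fact.out : p.Prime).ne_one (by rw [← hx, h, addOrderOf_zero])
  obtain ⟨b, hb⟩ : ∃ b, lf.form x b ≠ 0 := not_forall.mp (mt (lf.adjoint_injective x) hx0)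
  obtain ⟨k, hk⟩ := AddSubgroup.mem_zmultiples_iff.mp
    (AddSubgroup.mem_zmultiples_of_nsmul_eq_zero hsq hx
      (y := m • b) (by rw [smul_smul, ← hm, card_nsmul_eq_zero']))
  have hmb : m • lf.form x b ≠ 0 := fun h ↦
    hpm (lf.addOrderOf_form_eq_of_addOrderOf_eq_prime hx hb ▸ addOrderOf_dvd_of_nsmul_eq_zero h)
  intro hxx
  rw [← nsmul_right, ← hk, zsmul_right, hxx, smul_zero] at hmb
  exact hmb rfl

end LinkingForm

/-- Goeritz, algebraic form: if a finite abelian group with a linking form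
admits an automorphism `Φ` with `λ(Φa,Φb) = -λ(a,b)`, then for every prime `p ≡ 3 mod 4`,
either `p ∤ |H|` or `p² ∣ |H|`. -/
theorem goeritz_algebraic {H : Type*} [AddCommGroup H] [Finite H]
    (lf : LinkingForm H) (Φ : H ≃+ H)
    (hΦ : ∀ a b : H, lf.form (Φ a) (Φ b) = - lf.form a b)
    (p : ℕ) (hp : p.Prime) (hp4 : p % 4 = 3) :
    ¬ (p ∣ Nat.card H) ∨ p ^ 2 ∣ Nat.card H := by
  have : Fact p.Prime := ⟨hp⟩
  rw [or_iff_not_imp_left, not_not]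
  intro hdvd
  by_contra hsq
  obtain ⟨x, hx⟩ := exists_prime_addOrderOf_dvd_card' p hdvd
  obtain ⟨u, hu⟩ := AddSubgroup.mem_zmultiples_iff.mp
    (AddSubgroup.mem_zmultiples_of_nsmul_eq_zero hsq hx (y := Φ x)
      (by rw [← map_nsmul, ← hx, addOrderOf_nsmul_eq_zero, map_zero]))
  have hd : addOrderOf (lf.form x x) = p := lf.addOrderOf_form_eq_of_addOrderOf_eq_prime hx
    (lf.form_self_ne_zero_of_addOrderOf_eq_prime hsq hx)
  have hu2 : (u ^ 2 + 1) • lf.form x x = 0 := by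
    have h := hΦ x x
    rw [← hu, lf.zsmul_left, lf.zsmul_right, smul_smul] at h
    rw [add_zsmul, sq, h, one_zsmul, neg_add_cancel]
  exact ZMod.mod_four_ne_three_of_dvd_sq_add_one
    (hd ▸ addOrderOf_dvd_iff_zsmul_eq_zero.mpr hu2) hp4
end
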